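/- Let n ≥ 1, let N ≥ 2 be even, and let λ ∈ ℤ^n. Suppose there exist σ ∈ W and k ∈ ℤ^n such that σ(λ+ρ) + (N/2)·k = λ+ρ and ε'(σ)·(−1)^{k_1+⋯+k_n} = −1. Then S'_{λ,μ} = 0 for every μ ∈ ℤ^n. (In particular, the function λ ↦ S'_{λ,μ} vanishes on the walls of the fundamental alcove, i.e., for λ ∈ the closed alcove but not its interior.) -/

import Mathlib

open Complex Finset

/-- `qp N r = exp(2πi r / N)`, i.e. `q^r` for `q = exp(2πi/N)`. -/
noncomputable def qp (N : ℕ) (r : ℚ) : ℂ :=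
  Complex.exp (2 * (Real.pi : ℂ) * Complex.I * (r : ℂ) / (N : ℂ))

/-- The Weyl vector of `osp(1|2n)`: `ρ_j = n - j + 1/2` for `j = 1, …, n`
(0-indexed: `ρ j = n - j - 1/2`). -/
def rhoV (n : ℕ) : Fin n → ℚ := fun j => (n : ℚ) - (j : ℚ) - 1/2

/-- The standard dot product on `ℚ^n`. -/
def dotp {n : ℕ} (x y : Fin n → ℚ) : ℚ := ∑ j, x j * y j

/-- Coercion of an integer vector to a rational vector. -/
def intC {n : ℕ} (lam : Fin n → ℤ) : Fin n → ℚ := fun j => (lam j : ℚ)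

/-- Coercion of an element of `X_M = {0,…,M-1}^n` to a rational vector. -/
def finC {n M : ℕ} (mu : Fin n → Fin M) : Fin n → ℚ := fun j => ((mu j : ℕ) : ℚ)

/-- The `j`-th standard basis vector of `ℚ^n`. -/
def stdB (n : ℕ) (j : Fin n) : Fin n → ℚ := fun l => if l = j then 1 else 0

/-- The hyperoctahedral group (Weyl group of `osp(1|2n)`): a permutation with signs. -/
abbrev HypOct (n : ℕ) := Equiv.Perm (Fin n) × (Fin n → ℤˣ)

/-- Action of the hyperoctahedral group on `ℚ^n` by signed permutation of coordinates. -/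
def Wact {n : ℕ} (σ : HypOct n) (x : Fin n → ℚ) : Fin n → ℚ :=
  fun j => ((σ.2 j : ℤ) : ℚ) * x (σ.1⁻¹ j)

/-- `ε'(σ) = sgn(π) · ∏_j s_j` for `σ = (π, s)`. -/
def epsW {n : ℕ} (σ : HypOct n) : ℤˣ :=
  Equiv.Perm.sign σ.1 * ∏ j, σ.2 j

/-- `S'_{λ,μ} = Σ_{σ∈W} ε'(σ) q^{2(λ+ρ, σ(μ+ρ))}` (for rational vectors `λ, μ`). -/
noncomputable def Sprime (n N : ℕ) (lam mu : Fin n → ℚ) : ℂ :=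
  ∑ σ : HypOct n,
    ((epsW σ : ℤ) : ℂ) * qp N (2 * dotp (lam + rhoV n) (Wact σ (mu + rhoV n)))

/-- `Q_μ = Σ_{σ∈W} ε'(σ) q^{2(ρ, σ(μ+ρ))}`. -/
noncomputable def Qmu (n N : ℕ) (mu : Fin n → ℤ) : ℂ :=
  ∑ σ : HypOct n,
    ((epsW σ : ℤ) : ℂ) * qp N (2 * dotp (rhoV n) (Wact σ (intC mu + rhoV n)))

/-- Gauss sum `G(N,m) = Σ_{j=0}^{N-1} q^{j(j+m)}` with `q = exp(2πi/N)`. -/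
noncomputable def GaussG (N : ℕ) (m : ℤ) : ℂ :=
  ∑ j : Fin N, qp N ((j : ℚ) * ((j : ℚ) + (m : ℚ)))

/-- `Σ_{μ ∈ X_M} q^{(μ, μ+2ρ)}` where `q = exp(2πi/N)`. -/
noncomputable def sumX (n N M : ℕ) : ℂ :=
  ∑ mu : Fin n → Fin M, qp N (dotp (finC mu) (finC mu + 2 • rhoV n))

/-- `Σ_{λ ∈ X_M} q^{(λ,λ)} S'_{λ,μ}` where `q = exp(2πi/N)`. -/
noncomputable def sumXS (n N M : ℕ) (mu : Fin n → ℤ) : ℂ :=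
  ∑ lam : Fin n → Fin M, qp N (dotp (finC lam) (finC lam)) * Sprime n N (finC lam) (intC mu)
/-!
Write `v = λ + ρ` and `u = μ + ρ`. Left multiplication by the given `σ` permutes `W`, and
`(v, τu) = (σv, στu) = (v, στu) - (N/2)(k, στu)`. Since `u` lies in `ρ + ℤⁿ`, so does `στu`,
hence `2(k, στu)` is an integer of the parity of `k₁ + ⋯ + kₙ` and
`q^{N(k, στu)} = (-1)^{k₁ + ⋯ + kₙ}`. Together with `ε'(στ) = ε'(σ)ε'(τ)` and the sign
condition, the summand of `S'_{λ,μ}` at `στ` is minus the summand at `τ`, so `S'_{λ,μ} = -S'_{λ,μ}`.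
-/

theorem Fintype.sum_eq_zero_of_comp_eq_neg {α R : Type*} [Fintype α] [Ring R] [NoZeroDivisors R]
    [CharZero R] {e : α → α} (he : Function.Injective e) {f : α → R}
    (hf : ∀ a, f (e a) = -f a) : ∑ a, f a = 0 := by
  have hsum : ∑ a, f (e a) = ∑ a, f a := (Finite.injective_iff_bijective.mp he).sum_comp f
  simp only [hf, Finset.sum_neg_distrib, neg_eq_iff_add_eq_zero, add_self_eq_zero] at hsum
  exact hsum

namespace HypOct

variable {n : ℕ}

/-- The semidirect-product law; the instance `Mul (HypOct n)` is the direct product's. -/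
def mul (σ τ : HypOct n) : HypOct n :=
  (σ.1 * τ.1, fun j => σ.2 j * τ.2 (σ.1⁻¹ j))

theorem mul_left_injective (σ : HypOct n) : Function.Injective (mul σ) := by
  rintro ⟨π, s⟩ ⟨π', s'⟩ h
  obtain ⟨hπ, hs⟩ := Prod.mk.inj h
  obtain rfl := mul_left_cancel hπ
  refine Prod.ext rfl (funext fun j => ?_)
  simpa using congrFun hs (σ.1 j)

end HypOct

section Weyl

variable {n : ℕ}

theorem Wact_mul (σ τ : HypOct n) (x : Fin n → ℚ) :
    Wact (σ.mul τ) x = Wact σ (Wact τ x) := by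
  funext j
  simp [Wact, HypOct.mul, mul_assoc]

theorem epsW_mul (σ τ : HypOct n) : epsW (σ.mul τ) = epsW σ * epsW τ := by
  simp only [epsW, HypOct.mul, Equiv.Perm.sign_mul, prod_mul_distrib,
    Equiv.prod_comp σ.1⁻¹ τ.2]
  exact mul_mul_mul_comm _ _ _ _

theorem dotp_sub_left (x y z : Fin n → ℚ) : dotp (x - y) z = dotp x z - dotp y z :=
  sub_dotProduct x y z

theorem dotp_smul_left (c : ℚ) (x z : Fin n → ℚ) : dotp (c • x) z = c * dotp x z :=
  smul_dotProduct c x z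

theorem dotp_Wact_Wact (σ : HypOct n) (x y : Fin n → ℚ) :
    dotp (Wact σ x) (Wact σ y) = dotp x y := by
  unfold dotp Wact
  rw [← Equiv.sum_comp σ.1]
  refine sum_congr rfl fun j _ => ?_
  rcases Int.units_eq_one_or (σ.2 (σ.1 j)) with h | h <;> simp [h]

/-- The coset `ρ + ℤⁿ`. -/
def IsHalfOddIntegral (w : Fin n → ℚ) : Prop :=
  ∀ j, ∃ m : ℤ, w j = m + 1 / 2

theorem isHalfOddIntegral_intC_add_rhoV (mu : Fin n → ℤ) :
    IsHalfOddIntegral (intC mu + rhoV n) :=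
  fun j => ⟨mu j + n - j - 1, by simp [intC, rhoV]; ring⟩

theorem IsHalfOddIntegral.Wact {w : Fin n → ℚ} (hw : IsHalfOddIntegral w) (σ : HypOct n) :
    IsHalfOddIntegral (Wact σ w) := by
  intro j
  obtain ⟨m, hm⟩ := hw (σ.1⁻¹ j)
  rcases Int.units_eq_one_or (σ.2 j) with h | h
  · exact ⟨m, by simp only [_root_.Wact, h, hm]; simp⟩
  · exact ⟨-m - 1, by simp only [_root_.Wact, h, hm]; push_cast; ring⟩

theorem IsHalfOddIntegral.exists_two_mul_dotp {w : Fin n → ℚ} (hw : IsHalfOddIntegral w)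
    (k : Fin n → ℤ) :
    ∃ c : ℤ, (c : ℚ) = 2 * dotp (intC k) w ∧ c.negOnePow = (∑ j, k j).negOnePow := by
  choose m hm using hw
  refine ⟨∑ j, k j * (2 * m j + 1), ?_, ?_⟩
  · simp only [dotp, intC, hm, Int.cast_sum, Int.cast_mul, Int.cast_add, Int.cast_ofNat,
      Int.cast_one, mul_sum]
    exact sum_congr rfl fun j _ => by ring
  · rw [Int.negOnePow_eq_iff, ← sum_sub_distrib]
    exact ⟨∑ j, k j * m j, by rw [← sum_add_distrib]; exact sum_congr rfl fun j _ => by ring⟩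

end Weyl

theorem qp_add (N : ℕ) (a b : ℚ) : qp N (a + b) = qp N a * qp N b := by
  simp only [qp, ← Complex.exp_add, Rat.cast_add, mul_add, add_div]

theorem qp_natCast_mul_int_div_two {N : ℕ} (hN : N ≠ 0) (c : ℤ) :
    qp N (N * c / 2) = ((c.negOnePow : ℤ) : ℂ) := by
  have harg : 2 * (Real.pi : ℂ) * I * ((N * c / 2 : ℚ) : ℂ) / N = c * (Real.pi * I) := by
    push_cast
    field_simp
  rw [qp, harg, exp_int_mul, exp_pi_mul_I]
  rcases c.even_or_odd with hc | hc
  · simp [hc.neg_one_zpow, Int.negOnePow_even c hc]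
  · simp [hc.neg_one_zpow, Int.negOnePow_odd c hc]

theorem summand_mul_eq_neg {n N : ℕ} (hN : N ≠ 0) {σ : HypOct n} {v : Fin n → ℚ}
    {k : Fin n → ℤ} (hfix : Wact σ v + ((N : ℚ) / 2) • intC k = v)
    (hsgn : epsW σ * (-1 : ℤˣ) ^ (∑ j, k j) = -1) {u : Fin n → ℚ} (hu : IsHalfOddIntegral u)
    (τ : HypOct n) :
    ((epsW (σ.mul τ) : ℤ) : ℂ) * qp N (2 * dotp v (Wact (σ.mul τ) u)) =
      -(((epsW τ : ℤ) : ℂ) * qp N (2 * dotp v (Wact τ u))) := by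
  rw [← Int.negOnePow_def] at hsgn
  obtain ⟨c, hc, hcpar⟩ := (hu.Wact (σ.mul τ)).exists_two_mul_dotp k
  have hdot : 2 * dotp v (Wact (σ.mul τ) u) = 2 * dotp v (Wact τ u) + N * c / 2 := by
    have hτ : dotp v (Wact τ u) = dotp (Wact σ v) (Wact (σ.mul τ) u) := by
      rw [Wact_mul, dotp_Wact_Wact]
    rw [hτ, eq_sub_of_add_eq hfix, dotp_sub_left, dotp_smul_left, hc]
    ring
  have hsign : epsW (σ.mul τ) * c.negOnePow = -epsW τ := by
    rw [epsW_mul, hcpar, mul_right_comm, hsgn, neg_one_mul]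
  rw [hdot, qp_add, qp_natCast_mul_int_div_two hN]
  calc ((epsW (σ.mul τ) : ℤ) : ℂ) * (qp N (2 * dotp v (Wact τ u)) * ((c.negOnePow : ℤ) : ℂ))
      = (((epsW (σ.mul τ) * c.negOnePow : ℤˣ) : ℤ) : ℂ) * qp N (2 * dotp v (Wact τ u)) := by
        push_cast; ring
    _ = -(((epsW τ : ℤ) : ℂ) * qp N (2 * dotp v (Wact τ u))) := by
        rw [hsign]; push_cast; ring

theorem Sprime_vanishes_on_walls_general (n N : ℕ) (hN : 2 ≤ N)
    (lam : Fin n → ℤ)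
    (h : ∃ (σ : HypOct n) (k : Fin n → ℤ),
        Wact σ (intC lam + rhoV n) + ((N : ℚ) / 2) • intC k = intC lam + rhoV n ∧
        epsW σ * (-1 : ℤˣ) ^ (∑ j, k j) = -1) :
    ∀ mu : Fin n → ℤ, Sprime n N (intC lam) (intC mu) = 0 := by
  intro mu
  obtain ⟨σ, k, hfix, hsgn⟩ := h
  exact Fintype.sum_eq_zero_of_comp_eq_neg σ.mul_left_injective
    (summand_mul_eq_neg (by omega) hfix hsgn (isHalfOddIntegral_intC_add_rhoV mu))

/-- For even `N ≥ 2` and `λ ∈ ℤ^n`: if there are `σ ∈ W` and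
`k ∈ ℤ^n` with `σ(λ+ρ) + (N/2)k = λ+ρ` and `ε'(σ)·(−1)^{k_1+⋯+k_n} = −1`,
then `S'_{λ,μ} = 0` for every `μ ∈ ℤ^n`. -/
theorem Sprime_vanishes_on_walls (n N : ℕ) (hn : 1 ≤ n) (hN : 2 ≤ N) (hNe : 2 ∣ N)
    (lam : Fin n → ℤ)
    (h : ∃ (σ : HypOct n) (k : Fin n → ℤ),
        Wact σ (intC lam + rhoV n) + ((N : ℚ) / 2) • intC k = intC lam + rhoV n ∧
        epsW σ * (-1 : ℤˣ) ^ (∑ j, k j) = -1) :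
    ∀ mu : Fin n → ℤ, Sprime n N (intC lam) (intC mu) = 0 :=
  Sprime_vanishes_on_walls_general n N hN lam h
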